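/- Exact Block-Encoding of a Diagonal Matrix from a Digital Oracle (Lemma B.16): Let N = 2^n and D = 2^d. Let a_0,…,a_{N−1} ∈ [−1,1] be reals, and let b_0,…,b_{N−1} ∈ {0,…,D−1} be integers with cos(π b_j / D) = a_j for every j. Let U be a unitary on ℂ^{2^d} ⊗ ℂ^{2^n} satisfying U(|0⟩_d ⊗ |j⟩_n) = |b_j⟩_d ⊗ |j⟩_n for all j. Define the controlled rotation CR_Y(t) := Σ_{a=0}^{D−1} e^{−i a t Y} ⊗ |a⟩⟨a| on ℂ² ⊗ ℂ^{2^d}, where Y is the 2×2 Pauli-Y matrix, and define V := (I₂ ⊗ U†)(CR_Y(π/D) ⊗ I_N)(I₂ ⊗ U). Then (⟨0|_{d+1} ⊗ I_N) V (|0⟩_{d+1} ⊗ I_N) = diag(a_0,…,a_{N−1}); i.e. V is a (1, d+1, 0)-block-encoding of A = diag(a_0,…,a_{N−1}). -/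

import Mathlib

/-!
Because `U` sends `|0⟩|j⟩` to `|b_j⟩|j⟩`, the `(|0⟩|0⟩|i⟩, |0⟩|0⟩|j⟩)` entry of
`V = (I ⊗ U)† (CR_Y ⊗ I) (I ⊗ U)` is the `(|0⟩|b_i⟩|i⟩, |0⟩|b_j⟩|j⟩)` entry of
`CR_Y ⊗ I`. `CR_Y(t)` is block diagonal with blocks `e^{-ibtY}`, whose top-left entry is
`cos(bt)`, so that entry is `δ_ij cos(π b_j / D) = δ_ij a_j`. Unitarity holds since the
rotation blocks are unitary and Kronecker products, reindexings and products of unitaries are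
unitary.
-/

open scoped Kronecker Matrix

noncomputable section

/-- The rotation `e^{-iθY} = cos θ · I - i sin θ · Y`. -/
def RYmat (θ : ℝ) : Matrix (Fin 2) (Fin 2) ℂ :=
  !![(Real.cos θ : ℂ), -(Real.sin θ : ℂ); (Real.sin θ : ℂ), (Real.cos θ : ℂ)]

/-- The controlled rotation `CR_Y(t) = Σ_a e^{-iatY} ⊗ |a⟩⟨a|` on `ℂ² ⊗ ℂ^{2^d}`. -/
def CRY (d : ℕ) (t : ℝ) : Matrix (Fin 2 × Fin (2^d)) (Fin 2 × Fin (2^d)) ℂ :=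
  ∑ a : Fin (2^d), RYmat ((a : ℕ) * t) ⊗ₖ Matrix.single a a (1 : ℂ)

namespace Matrix

variable {l m n o R : Type*} [Semiring R]

theorem reindex_mem_unitary [Fintype m] [Fintype n] [DecidableEq m] [DecidableEq n] [StarRing R]
    (e : m ≃ n) {M : Matrix m m R} (hM : M ∈ unitary (Matrix m m R)) :
    reindex e e M ∈ unitary (Matrix n n R) := by
  simp only [Unitary.mem_iff, star_eq_conjTranspose] at *
  simp only [reindex_apply, conjTranspose_submatrix, submatrix_mul_equiv, hM.1, hM.2,
    submatrix_one_equiv, and_self]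

theorem blockDiagonal_mem_unitary [Fintype m] [Fintype o] [DecidableEq m] [DecidableEq o]
    [StarRing R] {M : o → Matrix m m R} (hM : ∀ k, M k ∈ unitary (Matrix m m R)) :
    blockDiagonal M ∈ unitary (Matrix (m × o) (m × o) R) := by
  simp only [Unitary.mem_iff, star_eq_conjTranspose] at hM ⊢
  simp only [blockDiagonal_conjTranspose, ← blockDiagonal_mul, hM]
  constructor <;> exact blockDiagonal_one

theorem sum_kronecker_single_eq_blockDiagonal [Fintype o] [DecidableEq o]
    (M : o → Matrix m n R) : ∑ k, M k ⊗ₖ single k k (1 : R) = blockDiagonal M := by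
  ext ⟨i, k⟩ ⟨j, k'⟩
  simp [sum_apply, blockDiagonal_apply, single_apply, ite_and]

theorem one_kronecker_apply_of_col_eq_single [DecidableEq l] [DecidableEq m] {U : Matrix m n R}
    {q : n} {q' : m} (hq : ∀ r, U r q = if r = q' then 1 else 0) (x : l) (r : l × m) :
    ((1 : Matrix l l R) ⊗ₖ U) r (x, q) = if r = (x, q') then 1 else 0 := by
  obtain ⟨y, r⟩ := r
  simp [hq, one_apply, Prod.ext_iff, ← ite_and, and_comm]

theorem conjTranspose_mul_mul_apply_of_col_eq_single [Fintype m] [DecidableEq m] [StarRing R]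
    {U : Matrix m n R} {p q : n} {p' q' : m} (hp : ∀ r, U r p = if r = p' then 1 else 0)
    (hq : ∀ r, U r q = if r = q' then 1 else 0) (B : Matrix m m R) :
    (Uᴴ * B * U) p q = B p' q' := by
  simp [mul_apply, hp, hq, apply_ite star]

end Matrix

open Matrix

theorem RYmat_mem_unitaryGroup (θ : ℝ) : RYmat θ ∈ unitaryGroup (Fin 2) ℂ := by
  have h : RYmat θ * (RYmat θ)ᴴ = 1 := by
    ext i j
    fin_cases i <;> fin_cases j <;>
      simp [RYmat, mul_apply, Fin.sum_univ_two, Complex.ext_iff, Complex.cos_ofReal_re,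
        Complex.sin_ofReal_re, ← sq, mul_comm (Real.sin θ)]
  exact mem_unitaryGroup_iff.mpr h

theorem CRY_eq_blockDiagonal (d : ℕ) (t : ℝ) :
    CRY d t = blockDiagonal fun a : Fin (2^d) => RYmat ((a : ℕ) * t) :=
  sum_kronecker_single_eq_blockDiagonal _

theorem CRY_mem_unitaryGroup (d : ℕ) (t : ℝ) :
    CRY d t ∈ unitaryGroup (Fin 2 × Fin (2^d)) ℂ := by
  rw [CRY_eq_blockDiagonal]
  exact blockDiagonal_mem_unitary fun _ => RYmat_mem_unitaryGroup _

theorem CRY_zero_zero_apply (d : ℕ) (t : ℝ) (a b : Fin (2^d)) :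
    CRY d t (0, a) (0, b) = if a = b then (Real.cos ((a : ℕ) * t) : ℂ) else 0 := by
  simp [CRY_eq_blockDiagonal, blockDiagonal_apply, RYmat]

theorem diagonal_block_encoding_from_digital_oracle
    (n d : ℕ) (av : Fin (2^n) → ℝ)
    (bv : Fin (2^n) → Fin (2^d))
    (hcos : ∀ j, Real.cos (Real.pi * (bv j : ℕ) / 2^d) = av j)
    (U : Matrix (Fin (2^d) × Fin (2^n)) (Fin (2^d) × Fin (2^n)) ℂ)
    (hUu : U ∈ Matrix.unitaryGroup (Fin (2^d) × Fin (2^n)) ℂ)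
    (hU : ∀ (j : Fin (2^n)) (p : Fin (2^d) × Fin (2^n)),
        U p ((0 : Fin (2^d)), j) = if p = (bv j, j) then 1 else 0)
    (V : Matrix (Fin 2 × (Fin (2^d) × Fin (2^n))) (Fin 2 × (Fin (2^d) × Fin (2^n))) ℂ)
    (hV : V = ((1 : Matrix (Fin 2) (Fin 2) ℂ) ⊗ₖ Uᴴ)
        * (Matrix.reindex (Equiv.prodAssoc (Fin 2) (Fin (2^d)) (Fin (2^n)))
            (Equiv.prodAssoc (Fin 2) (Fin (2^d)) (Fin (2^n)))
            (CRY d (Real.pi / 2^d) ⊗ₖ (1 : Matrix (Fin (2^n)) (Fin (2^n)) ℂ)))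
        * ((1 : Matrix (Fin 2) (Fin 2) ℂ) ⊗ₖ U)) :
    V ∈ Matrix.unitaryGroup (Fin 2 × (Fin (2^d) × Fin (2^n))) ℂ ∧
    (Matrix.of fun i j : Fin (2^n) =>
        V ((0 : Fin 2), ((0 : Fin (2^d)), i)) ((0 : Fin 2), ((0 : Fin (2^d)), j)))
      = Matrix.diagonal (fun j => (av j : ℂ)) := by
  have hUcol (j : Fin (2^n)) := one_kronecker_apply_of_col_eq_single (l := Fin 2) (hU j) 0
  have hUH : (1 : Matrix (Fin 2) (Fin 2) ℂ) ⊗ₖ Uᴴ = (1 ⊗ₖ U)ᴴ := by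
    rw [conjTranspose_kronecker, conjTranspose_one]
  rw [hUH] at hV
  subst hV
  refine ⟨?_, ?_⟩
  · have hW := kronecker_mem_unitary (one_mem (unitaryGroup (Fin 2) ℂ)) hUu
    exact mul_mem (mul_mem (Unitary.star_mem hW)
      (reindex_mem_unitary _ (kronecker_mem_unitary (CRY_mem_unitaryGroup d _) (one_mem _)))) hW
  · ext i j
    rw [of_apply, conjTranspose_mul_mul_apply_of_col_eq_single (hUcol i) (hUcol j),
      reindex_apply, submatrix_apply]
    rcases eq_or_ne i j with rfl | hij
    · simp only [Equiv.prodAssoc_symm_apply, kroneckerMap_apply, CRY_zero_zero_apply, if_pos,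
        one_apply_eq, mul_one, diagonal_apply_eq, ← hcos]
      push_cast
      ring_nf
    · simp [hij]
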